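/- There exists an r-Smullyan model which satisfies F-Tarski+ (there is no M-predicate H such that False_M^+ = Φ(H) ∩ Sent_M^+) but does not satisfy T-Tarski (there is no M-predicate H with Φ(H) = True_M). Concretely, the simple model with Σ = {r, ♯} and Φ(♯) = ∅, extended by the r-Smullyan rule, is such a model. -/

import Mathlib

/-- A Smullyan model over a set of symbols `α`: a set `pred` of predicates
(finite strings over `α`) satisfying the prefix-freeness requirement (†), together
with a naming function `phi` assigning a set of strings to each string
(only its values on `pred` are relevant). -/
structure SmullyanModel (α : Type) where
  pred : Set (List α)
  prefixFree : ∀ H ∈ pred, ∀ X : List α, X ≠ [] → H ++ X ∉ pred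
  phi : List α → Set (List α)

namespace SmullyanModel

variable {α : Type} (M : SmullyanModel α)

/-- The set of `M`-sentences: strings of the form `H ++ X` with `H` a predicate. -/
def sent : Set (List α) := {S | ∃ H ∈ M.pred, ∃ X : List α, S = H ++ X}

/-- `Sent_M^+ = Sent_M \ Pred_M`. -/
def sentPlus : Set (List α) := M.sent \ M.pred

/-- `True_M`: the set of true `M`-sentences. -/
def trueSet : Set (List α) := {S | ∃ H ∈ M.pred, ∃ X ∈ M.phi H, S = H ++ X}

/-- `True_M^+ = True_M \ Pred_M`. -/
def truePlus : Set (List α) := M.trueSet \ M.pred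

/-- `False_M = Sent_M \ True_M`. -/
def falseSet : Set (List α) := M.sent \ M.trueSet

/-- `False_M^+ = Sent_M^+ \ True_M^+`. -/
def falsePlus : Set (List α) := M.sentPlus \ M.truePlus

/-- `M ⊨ S`. -/
def Sat (S : List α) : Prop := S ∈ M.trueSet

/-- `S ∈ Sent_M^+` is an `M`-fixed point of `H` if `M ⊨ S ↔ M ⊨ HS`. -/
def IsFixedPoint (H S : List α) : Prop :=
  S ∈ M.sentPlus ∧ (M.Sat S ↔ M.Sat (H ++ S))

/-- `M` is an `n`-Smullyan model (with negation symbol `n : α`):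
for every predicate `H`, `nH` is a predicate and `Φ(nH) = Σ* \ Φ(H)`. -/
def IsNModel (n : α) : Prop :=
  ∀ H ∈ M.pred, (n :: H) ∈ M.pred ∧ M.phi (n :: H) = {X : List α | X ∉ M.phi H}

/-- `M` is an `r`-Smullyan model (with repeat symbol `r : α`):
for every predicate `H`, `rH` is a predicate and `Φ(rH) = {K ∈ Pred : KK ∈ Φ(H)}`. -/
def IsRModel (r : α) : Prop :=
  ∀ H ∈ M.pred, (r :: H) ∈ M.pred ∧
    M.phi (r :: H) = {K : List α | K ∈ M.pred ∧ K ++ K ∈ M.phi H}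

/-- FPT: every `M`-predicate has an `M`-fixed point. -/
def FPT : Prop := ∀ H ∈ M.pred, ∃ S : List α, M.IsFixedPoint H S

/-- T-Tarski: no `M`-predicate names `True_M`. -/
def TTarski : Prop := ¬ ∃ H ∈ M.pred, M.phi H = M.trueSet

/-- F-Tarski: no `M`-predicate names `False_M`. -/
def FTarski : Prop := ¬ ∃ H ∈ M.pred, M.phi H = M.falseSet

/-- T-Tarski⁺: there is no `M`-predicate `H` with `True_M⁺ = Φ(H) ∩ Sent_M⁺`. -/
def TTarskiPlus : Prop := ¬ ∃ H ∈ M.pred, M.truePlus = M.phi H ∩ M.sentPlus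

/-- F-Tarski⁺: there is no `M`-predicate `H` with `False_M⁺ = Φ(H) ∩ Sent_M⁺`. -/
def FTarskiPlus : Prop := ¬ ∃ H ∈ M.pred, M.falsePlus = M.phi H ∩ M.sentPlus

/-- mG1. -/
def MG1 : Prop :=
  ∀ H ∈ M.pred, M.phi H ⊆ M.trueSet →
    ∃ S ∈ M.sent, M.Sat S ∧ S ∉ M.phi H

/-- mG1⁺. -/
def MG1Plus : Prop :=
  ∀ H ∈ M.pred, M.phi H ∩ M.sentPlus ⊆ M.truePlus →
    ∃ S ∈ M.sentPlus, M.Sat S ∧ S ∉ M.phi H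

/-- G1 (for `n`-Smullyan models). -/
def G1 (n : α) : Prop :=
  ∀ H ∈ M.pred, M.phi H ⊆ M.trueSet →
    ∃ S ∈ M.sent, S ∉ M.phi H ∧ (n :: S) ∉ M.phi H

/-- G1⁺ (for `n`-Smullyan models). -/
def G1Plus (n : α) : Prop :=
  ∀ H ∈ M.pred, M.phi H ∩ M.sentPlus ⊆ M.truePlus →
    ∃ S ∈ M.sentPlus, S ∉ M.phi H ∧ (n :: S) ∉ M.phi H

/-- The predicate set of a simple model: strings `X♯` where `X` contains no `♯`. -/
def simplePred (sharp : α) : Set (List α) :=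
  {L | ∃ X : List α, sharp ∉ X ∧ L = X ++ [sharp]}

end SmullyanModel

inductive SmSym where
  | r
  | sharp
deriving DecidableEq

/-! Take `Φ` empty on every predicate. Then nothing is true, so any predicate names
`True_M = ∅` and T-Tarski fails; the `r`-rule holds because both of its sides are empty.
On the other hand `False_M^+ = Sent_M^+` contains `♯♯`, while every `Φ(H) ∩ Sent_M^+` is
empty, which gives F-Tarski⁺. -/

namespace SmullyanModel

variable {α : Type}

theorem simplePred_prefixFree (sharp : α) :
    ∀ H ∈ simplePred sharp, ∀ X : List α, X ≠ [] → H ++ X ∉ simplePred sharp := by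
  rintro _ ⟨H, hH, rfl⟩ X hX ⟨K, hK, hHXK⟩
  obtain ⟨X, a, rfl⟩ := (List.eq_nil_or_concat' X).resolve_left hX
  -- Both sides end in a single symbol, so the remaining prefixes agree and `K` contains `♯`.
  have hprefix : H ++ [sharp] ++ X = K :=
    List.append_inj_left' (t₁ := [a]) (t₂ := [sharp]) (by rw [← hHXK]; simp) rfl
  exact hK (hprefix ▸ by simp)

section SimplePred

variable {sharp : α}

theorem singleton_mem_simplePred : [sharp] ∈ simplePred sharp :=
  ⟨[], List.not_mem_nil, rfl⟩

theorem pair_not_mem_simplePred : [sharp, sharp] ∉ simplePred sharp := by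
  rintro ⟨X, hX, hXs⟩
  have : [sharp] = X := List.append_inj_left' (s₁ := [sharp]) (t₁ := [sharp]) hXs rfl
  exact hX (this ▸ List.mem_singleton_self sharp)

theorem cons_mem_simplePred {r : α} (hr : r ≠ sharp) {H : List α} (hH : H ∈ simplePred sharp) :
    r :: H ∈ simplePred sharp := by
  obtain ⟨X, hX, rfl⟩ := hH
  exact ⟨r :: X, by simp [hX, Ne.symm hr], rfl⟩

end SimplePred

section EmptyNaming

variable (M : SmullyanModel α) (hΦ : ∀ H ∈ M.pred, M.phi H = ∅)
include hΦ

theorem trueSet_eq_empty_of_phi_eq_empty : M.trueSet = ∅ := by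
  ext S
  simp only [trueSet, Set.mem_ofPred_eq, Set.mem_empty_iff_false, iff_false]
  rintro ⟨H, hH, X, hX, -⟩
  simp [hΦ H hH] at hX

theorem isRModel_of_phi_eq_empty {r : α} (hr : ∀ H ∈ M.pred, r :: H ∈ M.pred) :
    M.IsRModel r := by
  intro H hH
  refine ⟨hr H hH, ?_⟩
  simp [hΦ _ (hr H hH), hΦ H hH]

theorem fTarskiPlus_of_phi_eq_empty (hsent : M.sentPlus.Nonempty) : M.FTarskiPlus := by
  rintro ⟨H, hH, hfalse⟩
  have : M.falsePlus = M.sentPlus := by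
    simp [falsePlus, truePlus, M.trueSet_eq_empty_of_phi_eq_empty hΦ]
  rw [this, hΦ H hH, Set.empty_inter] at hfalse
  exact hsent.ne_empty hfalse

theorem not_tTarski_of_phi_eq_empty (hpred : M.pred.Nonempty) : ¬ M.TTarski := by
  obtain ⟨H, hH⟩ := hpred
  exact fun h => h ⟨H, hH, by rw [hΦ H hH, M.trueSet_eq_empty_of_phi_eq_empty hΦ]⟩

end EmptyNaming

end SmullyanModel

/-- There is an `r`-simple model (Σ = {r, ♯}, Φ(♯) = ∅) satisfying F-Tarski⁺
but not T-Tarski. -/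
theorem stmt_13 :
    ∃ M : SmullyanModel SmSym,
      M.pred = SmullyanModel.simplePred SmSym.sharp ∧
      M.IsRModel SmSym.r ∧
      M.phi [SmSym.sharp] = ∅ ∧
      M.FTarskiPlus ∧
      ¬ M.TTarski := by
  let M : SmullyanModel SmSym :=
    ⟨_, SmullyanModel.simplePred_prefixFree SmSym.sharp, fun _ => ∅⟩
  have hΦ : ∀ H ∈ M.pred, M.phi H = ∅ := fun _ _ => rfl
  have hsent : [SmSym.sharp, SmSym.sharp] ∈ M.sentPlus :=
    ⟨⟨[.sharp], SmullyanModel.singleton_mem_simplePred, [.sharp], rfl⟩,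
      SmullyanModel.pair_not_mem_simplePred⟩
  refine ⟨M, rfl, ?_, rfl, ?_, ?_⟩
  · exact M.isRModel_of_phi_eq_empty hΦ
      fun _ => SmullyanModel.cons_mem_simplePred SmSym.noConfusion
  · exact M.fTarskiPlus_of_phi_eq_empty hΦ ⟨_, hsent⟩
  · exact M.not_tTarski_of_phi_eq_empty hΦ ⟨_, SmullyanModel.singleton_mem_simplePred⟩
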